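/- arXiv:2107.00920 — 4 statements merged into one kernel-verified Lean document; each statement's English description precedes it below -/
import Mathlib

section
/- For any real numbers a, b, c and ε ∈ {1, -1}, the system of equations a(a² - εb²)b = 0, a(a² - εc²)c = 0, b(c² - b²)c = 0 together with a² + εb² + εc² = 1 and a,b,c ≥ 0 has, in the case ε = 1, exactly the solutions (1,0,0), (0,1,0), (0,0,1), (1/√2,1/√2,0), (1/√2,0,1/√2), (0,1/√2,1/√2), (1/√3,1/√3,1/√3). -/
private lemma sq_inj (x y : ℝ) (hx : 0 ≤ x) (hy : 0 ≤ y) (h : x ^ 2 = y ^ 2) : x = y := by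
  have := (sq_eq_sq_iff_abs_eq_abs x y).mp h
  rwa [abs_of_nonneg hx, abs_of_nonneg hy] at this

/-- In the Riemannian case (ε = 1), the minor-vanishing equations together with
the normalization a² + b² + c² = 1 and a, b, c ≥ 0 have exactly the seven
listed solutions. -/
theorem riemannian_minor_solutions (a b c : ℝ)
    (ha : 0 ≤ a) (hb : 0 ≤ b) (hc : 0 ≤ c) :
    (a * (a ^ 2 - b ^ 2) * b = 0 ∧
     a * (a ^ 2 - c ^ 2) * c = 0 ∧
     b * (c ^ 2 - b ^ 2) * c = 0 ∧
     a ^ 2 + b ^ 2 + c ^ 2 = 1) ↔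
    ((a, b, c) = (1, 0, 0) ∨ (a, b, c) = (0, 1, 0) ∨ (a, b, c) = (0, 0, 1) ∨
     (a, b, c) = (1 / Real.sqrt 2, 1 / Real.sqrt 2, 0) ∨
     (a, b, c) = (1 / Real.sqrt 2, 0, 1 / Real.sqrt 2) ∨
     (a, b, c) = (0, 1 / Real.sqrt 2, 1 / Real.sqrt 2) ∨
     (a, b, c) = (1 / Real.sqrt 3, 1 / Real.sqrt 3, 1 / Real.sqrt 3)) := by
  have h2 : (Real.sqrt 2) ^ 2 = 2 := Real.sq_sqrt (by norm_num)
  have h3 : (Real.sqrt 3) ^ 2 = 3 := Real.sq_sqrt (by norm_num)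
  have e2 : (1 / Real.sqrt 2) ^ 2 = 1 / 2 := by rw [div_pow, h2]; norm_num
  have e3 : (1 / Real.sqrt 3) ^ 2 = 1 / 3 := by rw [div_pow, h3]; norm_num
  have s2 : 0 ≤ 1 / Real.sqrt 2 := by positivity
  have s3 : 0 ≤ 1 / Real.sqrt 3 := by positivity
  simp only [Prod.mk.injEq]
  constructor
  · rintro ⟨e1', e2', e3', e4⟩
    rcases mul_eq_zero.mp e1' with h1 | hb0
    · rcases mul_eq_zero.mp h1 with ha0 | hab
      · -- a = 0
        rcases mul_eq_zero.mp e3' with h5 | hc0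
        · rcases mul_eq_zero.mp h5 with hb0 | hbc
          · have : c = 1 := sq_inj c 1 hc (by norm_num)
              (by linear_combination e4 - a * ha0 - b * hb0)
            right; right; left; exact ⟨ha0, hb0, this⟩
          · have hbceq : b = c := sq_inj b c hb hc (by linarith)
            have hbv : b = 1 / Real.sqrt 2 := sq_inj b _ hb s2
              (by rw [e2]; linear_combination e4 / 2 - (a / 2) * ha0 + ((b + c) / 2) * hbceq)
            right; right; right; right; right; left
            exact ⟨ha0, hbv, hbceq.symm.trans hbv⟩
        · have : b = 1 := sq_inj b 1 hb (by norm_num)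
            (by linear_combination e4 - a * ha0 - c * hc0)
          right; left; exact ⟨ha0, this, hc0⟩
      · -- a² = b²
        have hab2 : a = b := sq_inj a b ha hb (by linarith)
        rcases mul_eq_zero.mp e2' with h5 | hc0
        · rcases mul_eq_zero.mp h5 with ha0 | hac
          · have hb0 : b = 0 := hab2.symm.trans ha0
            have : c = 1 := sq_inj c 1 hc (by norm_num)
              (by linear_combination e4 - a * ha0 - b * hb0)
            right; right; left; exact ⟨ha0, hb0, this⟩
          · have hac2 : a = c := sq_inj a c ha hc (by linarith)
            have hav : a = 1 / Real.sqrt 3 := sq_inj a _ ha s3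
              (by rw [e3]; linear_combination e4 / 3 + ((a + b) / 3) * hab2 + ((a + c) / 3) * hac2)
            right; right; right; right; right; right
            exact ⟨hav, hab2.symm.trans hav, hac2.symm.trans hav⟩
        · have hav : a = 1 / Real.sqrt 2 := sq_inj a _ ha s2
            (by rw [e2]; linear_combination e4 / 2 + ((a + b) / 2) * hab2 - (c / 2) * hc0)
          right; right; right; left
          exact ⟨hav, hab2.symm.trans hav, hc0⟩
    · -- b = 0
      rcases mul_eq_zero.mp e2' with h5 | hc0
      · rcases mul_eq_zero.mp h5 with ha0 | hac
        · have : c = 1 := sq_inj c 1 hc (by norm_num)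
            (by linear_combination e4 - a * ha0 - b * hb0)
          right; right; left; exact ⟨ha0, hb0, this⟩
        · have hac2 : a = c := sq_inj a c ha hc (by linarith)
          have hav : a = 1 / Real.sqrt 2 := sq_inj a _ ha s2
            (by rw [e2]; linear_combination e4 / 2 + ((a + c) / 2) * hac2 - (b / 2) * hb0)
          right; right; right; right; left
          exact ⟨hav, hb0, hac2.symm.trans hav⟩
      · have : a = 1 := sq_inj a 1 ha (by norm_num)
          (by linear_combination e4 - b * hb0 - c * hc0)
        left; exact ⟨this, hb0, hc0⟩
  · rintro (⟨rfl, rfl, rfl⟩ | ⟨rfl, rfl, rfl⟩ | ⟨rfl, rfl, rfl⟩ | ⟨rfl, rfl, rfl⟩ |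
      ⟨rfl, rfl, rfl⟩ | ⟨rfl, rfl, rfl⟩ | ⟨rfl, rfl, rfl⟩) <;>
    exact ⟨by ring, by ring, by ring, by norm_num [e2, e3]⟩
end

section
/- For ε = -1, the system a(a² + b²)b = 0, a(a² + c²)c = 0, b(c² - b²)c = 0 with a² - b² - c² = ±1 and a,b,c ≥ 0 has exactly the solutions (1,0,0), (0,1,0), (0,0,1), and (0, 1/√2, 1/√2) (the last two with a² - b² - c² = -1). -/
/-- In the pseudo-Riemannian case (ε = -1), the minor-vanishing equations
together with the normalization a² - b² - c² = ±1 and a, b, c ≥ 0 have exactly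
the four listed solutions; the last two occur with a² - b² - c² = -1. -/
theorem pseudo_riemannian_minor_solutions (a b c : ℝ)
    (ha : 0 ≤ a) (hb : 0 ≤ b) (hc : 0 ≤ c) :
    (a * (a ^ 2 + b ^ 2) * b = 0 ∧
     a * (a ^ 2 + c ^ 2) * c = 0 ∧
     b * (c ^ 2 - b ^ 2) * c = 0 ∧
     (a ^ 2 - b ^ 2 - c ^ 2 = 1 ∨ a ^ 2 - b ^ 2 - c ^ 2 = -1)) ↔
    ((a, b, c) = (1, 0, 0) ∨ (a, b, c) = (0, 1, 0) ∨ (a, b, c) = (0, 0, 1) ∨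
     (a, b, c) = (0, 1 / Real.sqrt 2, 1 / Real.sqrt 2)) := by
  have hs2 : Real.sqrt 2 > 0 := by positivity
  have hs2sq : (1 / Real.sqrt 2) ^ 2 = 1 / 2 := by
    rw [div_pow, one_pow, Real.sq_sqrt (by norm_num : (2:ℝ) ≥ 0)]
  constructor
  · rintro ⟨h1, h2, h3, h4⟩
    rcases eq_or_lt_of_le ha with ha0 | ha0
    · -- a = 0
      have ha0 : a = 0 := ha0.symm
      subst ha0
      have hbc : b ^ 2 + c ^ 2 = 1 := by rcases h4 with h | h <;> nlinarith
      rcases eq_or_lt_of_le hb with hb0 | hb0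
      · -- b = 0, c = 1
        have hc1 : c = 1 := by nlinarith
        right; right; left; simp [← hb0, hc1]
      rcases eq_or_lt_of_le hc with hc0 | hc0
      · have hb1 : b = 1 := by nlinarith
        right; left; simp [← hc0, hb1]
      · -- b, c > 0, so c² = b², b = c = 1/√2
        have hcb : c ^ 2 = b ^ 2 := by
          have : c ^ 2 - b ^ 2 = 0 := by
            rcases mul_eq_zero.1 h3 with h | h
            · rcases mul_eq_zero.1 h with h | h
              · exact absurd h (ne_of_gt hb0)
              · exact h
            · exact absurd h (ne_of_gt hc0)
          linarith
        have hbc2 : b = c := by nlinarith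
        have hbval : b = 1 / Real.sqrt 2 := by
          have h2 : b ^ 2 = (1 / Real.sqrt 2) ^ 2 := by rw [hs2sq]; nlinarith
          nlinarith [sq_nonneg (b - 1 / Real.sqrt 2), one_div_pos.2 hs2]
        right; right; right; simp [hbval, ← hbc2]
    · -- a > 0: then b = 0 and c = 0
      have hb0 : b = 0 := by
        by_contra hbne
        have hb0 : 0 < b := lt_of_le_of_ne hb (Ne.symm hbne)
        have : 0 < a * (a ^ 2 + b ^ 2) * b := by positivity
        linarith
      have hc0 : c = 0 := by
        by_contra hcne
        have hc0 : 0 < c := lt_of_le_of_ne hc (Ne.symm hcne)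
        have : 0 < a * (a ^ 2 + c ^ 2) * c := by positivity
        linarith
      subst hb0; subst hc0
      have ha1 : a = 1 := by rcases h4 with h | h <;> nlinarith
      left; simp [ha1]
  · rintro (h | h | h | h) <;> simp only [Prod.mk.injEq] at h <;>
      obtain ⟨rfl, rfl, rfl⟩ := h <;> norm_num [hs2sq]
end

section
/- The matrix exponential of t·(cos u)·(m₁+m₂)/√2 + t·(sin u)·(m₄+m₅)/√2 equals the matrix F₂(t,u) with entries: F₁₁ = cos²(t/2), F₁₂ = -e^{-iu} sin(t)/√2, F₁₃ = e^{-2iu} sin²(t/2), F₂₁ = e^{iu} sin(t)/√2, F₂₂ = cos t, F₂₃ = -e^{-iu} sin(t)/√2, F₃₁ = e^{2iu} sin²(t/2), F₃₂ = e^{iu} sin(t)/√2, F₃₃ = cos²(t/2). -/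
/-!
The generator `X = (cos u (m₁ + m₂) + sin u (m₄ + m₅)) / √2` is `[[0, -b, 0], [a, 0, -b], [0, a, 0]]`
with `a = e^{iu}/√2`, `b = e^{-iu}/√2`, and every such matrix satisfies `X³ = -2ab X = -X`. Hence
Rodrigues' formula `exp (t X) = 1 + sin t X + (1 - cos t) X²` holds: the right-hand side solves
`F' = X F`, `F 0 = 1`, so `exp (-t X) F t` has zero derivative. The half-angle formulas turn the
entries of `1 + sin t X + (1 - cos t) X²` into those of `F₂(t,u)`.
-/

open Matrix Complex

noncomputable section

def m1 : Matrix (Fin 3) (Fin 3) ℂ := !![0, -1, 0; 1, 0, 0; 0, 0, 0]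
def m2 : Matrix (Fin 3) (Fin 3) ℂ := !![0, 0, 0; 0, 0, -1; 0, 1, 0]
def m4 : Matrix (Fin 3) (Fin 3) ℂ := !![0, I, 0; I, 0, 0; 0, 0, 0]
def m5 : Matrix (Fin 3) (Fin 3) ℂ := !![0, 0, 0; 0, 0, I; 0, I, 0]

section Rodrigues

variable {𝔸 : Type*}

def rodrigues [Ring 𝔸] [Algebra ℝ 𝔸] (X : 𝔸) (t : ℝ) : 𝔸 :=
  1 + Real.sin t • X + (1 - Real.cos t) • X ^ 2

variable [NormedRing 𝔸] [NormedAlgebra ℝ 𝔸] {X : 𝔸}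

theorem hasDerivAt_rodrigues (hX : X ^ 3 = -X) (t : ℝ) :
    HasDerivAt (rodrigues X) (X * rodrigues X t) t := by
  refine ((((Real.hasDerivAt_sin t).smul_const X).const_add 1).add
    (((Real.hasDerivAt_cos t).const_sub 1).smul_const (X ^ 2))).congr_deriv ?_
  rw [rodrigues, mul_add, mul_add, mul_one, mul_smul_comm, mul_smul_comm, ← pow_succ', hX, ← sq]
  module

theorem exp_smul_eq_rodrigues [CompleteSpace 𝔸] (hX : X ^ 3 = -X) (t : ℝ) :
    NormedSpace.exp (t • X) = rodrigues X t := by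
  let +nondep : NormedAlgebra ℚ 𝔸 := .restrictScalars ℚ ℝ 𝔸
  have hderiv (s : ℝ) : HasDerivAt (fun s => NormedSpace.exp (s • -X) * rodrigues X s) 0 s :=
    ((hasDerivAt_exp_smul_const (-X) s).mul (hasDerivAt_rodrigues hX s)).congr_deriv
      (by rw [mul_neg, neg_mul, mul_assoc, neg_add_cancel])
  have hinv : NormedSpace.exp (t • -X) * rodrigues X t = 1 := by
    simpa [rodrigues] using is_const_of_deriv_eq_zero (fun s => (hderiv s).differentiableAt)
      (fun s => (hderiv s).deriv) t 0
  have hcomm : Commute (t • X) (t • -X) := ((Commute.refl X).neg_right.smul_left t).smul_right t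
  calc NormedSpace.exp (t • X)
      = NormedSpace.exp (t • X) * (NormedSpace.exp (t • -X) * rodrigues X t) := by rw [hinv, mul_one]
    _ = rodrigues X t := by
      rw [← mul_assoc, ← NormedSpace.exp_add_of_commute hcomm, smul_neg, add_neg_cancel,
        NormedSpace.exp_zero, one_mul]

end Rodrigues

-- Matrices carry no global norm; the ℓ∞ operator norm induces their usual topology.
theorem Matrix.exp_smul_eq_rodrigues {n 𝔸 : Type*} [Fintype n] [DecidableEq n]
    [NormedRing 𝔸] [NormedAlgebra ℝ 𝔸] [CompleteSpace 𝔸] {X : Matrix n n 𝔸}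
    (hX : X ^ 3 = -X) (t : ℝ) :
    NormedSpace.exp (t • X) = rodrigues X t :=
  @_root_.exp_smul_eq_rodrigues _ Matrix.linftyOpNormedRing Matrix.linftyOpNormedAlgebra X
    (inferInstanceAs (CompleteSpace (n → n → 𝔸))) hX t

section Ladder

variable {R : Type*} [CommRing R]

def ladderMatrix (a b : R) : Matrix (Fin 3) (Fin 3) R := !![0, -b, 0; a, 0, -b; 0, a, 0]

theorem ladderMatrix_sq (a b : R) :
    ladderMatrix a b ^ 2 = !![-(a * b), 0, b ^ 2; 0, -(2 * (a * b)), 0; a ^ 2, 0, -(a * b)] := by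
  rw [sq, ladderMatrix, mul_fin_three]
  ring_nf

theorem ladderMatrix_pow_three (a b : R) :
    ladderMatrix a b ^ 3 = -(2 * (a * b)) • ladderMatrix a b := by
  rw [pow_succ, ladderMatrix_sq, ladderMatrix, mul_fin_three, smul_of]
  simp only [smul_cons, smul_eq_mul, smul_empty]
  ring_nf

end Ladder

theorem exp_smul_ladderMatrix {a b : ℂ} (hab : a * b = 1 / 2) (t : ℝ) :
    NormedSpace.exp (t • ladderMatrix a b) =
      !![(Real.cos (t / 2) : ℂ) ^ 2, -b * Real.sin t, 2 * b ^ 2 * (Real.sin (t / 2) : ℂ) ^ 2;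
        a * Real.sin t, Real.cos t, -b * Real.sin t;
        2 * a ^ 2 * (Real.sin (t / 2) : ℂ) ^ 2, a * Real.sin t, (Real.cos (t / 2) : ℂ) ^ 2] := by
  have hX : ladderMatrix a b ^ 3 = -ladderMatrix a b := by
    rw [ladderMatrix_pow_three, hab]
    norm_num
  have hcos : (Real.cos (t / 2) : ℂ) ^ 2 = (1 + Real.cos t) / 2 := by
    rw [← ofReal_pow, Real.cos_sq, mul_div_cancel₀ _ two_ne_zero]
    push_cast
    ring
  have hsin : (Real.sin (t / 2) : ℂ) ^ 2 = (1 - Real.cos t) / 2 := by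
    rw [← ofReal_pow, Real.sin_sq, Real.cos_sq, mul_div_cancel₀ _ two_ne_zero]
    push_cast
    ring
  rw [Matrix.exp_smul_eq_rodrigues hX, rodrigues, ladderMatrix_sq, hab, hcos, hsin, one_fin_three,
    ladderMatrix]
  simp only [smul_of, smul_cons, real_smul, ofReal_sub, ofReal_one, smul_empty, of_add_of,
    cons_add_cons, empty_add_empty]
  ring_nf

theorem generator_eq_ladderMatrix (u : ℝ) :
    (Real.cos u / Real.sqrt 2 : ℂ) • (m1 + m2) + (Real.sin u / Real.sqrt 2 : ℂ) • (m4 + m5) =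
      ladderMatrix (Complex.exp (I * u) / Real.sqrt 2) (Complex.exp (-I * u) / Real.sqrt 2) := by
  have hexp : Complex.exp (I * u) = Real.cos u + Real.sin u * I := by
    rw [mul_comm, exp_mul_I, ofReal_cos, ofReal_sin]
  have hexp_neg : Complex.exp (-I * u) = Real.cos u - Real.sin u * I := by
    rw [neg_mul, mul_comm, ← neg_mul, exp_mul_I, cos_neg, sin_neg, ofReal_cos, ofReal_sin]
    ring
  rw [hexp, hexp_neg]
  simp only [m1, m2, m4, m5, ladderMatrix, smul_of, smul_cons, smul_eq_mul, smul_empty, of_add_of,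
    cons_add_cons, empty_add_empty]
  ring_nf

/-- exp(t(cos u (m₁+m₂)/√2 + sin u (m₄+m₅)/√2)) equals the explicit matrix
F₂(t,u). -/
theorem exp_F2 (t u : ℝ) :
    NormedSpace.exp
        ((t : ℂ) • ((Real.cos u / Real.sqrt 2 : ℂ) • (m1 + m2) +
          (Real.sin u / Real.sqrt 2 : ℂ) • (m4 + m5))) =
      !![(Real.cos (t / 2) : ℂ) ^ 2,
           -Complex.exp (-I * u) * Real.sin t / Real.sqrt 2,
           Complex.exp (-2 * I * u) * (Real.sin (t / 2) : ℂ) ^ 2;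
         Complex.exp (I * u) * Real.sin t / Real.sqrt 2,
           (Real.cos t : ℂ),
           -Complex.exp (-I * u) * Real.sin t / Real.sqrt 2;
         Complex.exp (2 * I * u) * (Real.sin (t / 2) : ℂ) ^ 2,
           Complex.exp (I * u) * Real.sin t / Real.sqrt 2,
           (Real.cos (t / 2) : ℂ) ^ 2] := by
  have hsqrt : ((Real.sqrt 2 : ℝ) : ℂ) ^ 2 = 2 := by
    rw [← ofReal_pow, Real.sq_sqrt zero_le_two]
    norm_num
  have hab : Complex.exp (I * u) / Real.sqrt 2 * (Complex.exp (-I * u) / Real.sqrt 2) = 1 / 2 := by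
    rw [div_mul_div_comm, ← Complex.exp_add, neg_mul, add_neg_cancel, Complex.exp_zero, ← sq,
      hsqrt]
  have hexp_two : Complex.exp (2 * I * u) = Complex.exp (I * u) ^ 2 := by
    rw [← Complex.exp_nat_mul]
    ring_nf
  have hexp_neg_two : Complex.exp (-2 * I * u) = Complex.exp (-I * u) ^ 2 := by
    rw [← Complex.exp_nat_mul]
    ring_nf
  rw [Complex.coe_smul, generator_eq_ladderMatrix, exp_smul_ladderMatrix hab, hexp_two,
    hexp_neg_two]
  simp only [div_pow, hsqrt]
  ring_nf

end
end

section
/- For F₅(t,u) as above and the indefinite metric g(X,Y) = ½Re trace(I₋ Xᴴ I₋ Y) with I₋ = diag(1,1,-1), the pullback satisfies g(F₅⁻¹∂ₜF₅, F₅⁻¹∂ₜF₅) = -1, g(F₅⁻¹∂ₜF₅, F₅⁻¹∂ᵤF₅) = 0, and the m-component of F₅⁻¹∂ᵤF₅ has squared norm -(sinh(2t)/2)². -/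
/-!
With `P u` having `e^{∓iu}` in the (2,3) and (3,2) corners, `(P u)²` is the projection onto
`span {e₂, e₃}`, so `F5 t u = exp (t • P u)`, whose inverse is `F5 (-t) u`. Hence
`F₅⁻¹ ∂ₜF₅ = P u` and, with `Q u = ∂ᵤ P u`,
`F₅⁻¹ ∂ᵤF₅ = sinh t cosh t • Q u - i sinh² t • diag (0, 1, -1)`.
The diagonal term is the `h`-component and is `g`-orthogonal to every matrix with zero diagonal.
On the lower 2×2 block `I₋` contributes a factor `-1`, giving `g (P, P) = g (Q, Q) = -1`,
while the two corner contributions `∓i` to `g (P, Q)` cancel.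
-/

open Matrix Complex

noncomputable section

/-- The explicit matrix F₅(t,u). -/
def F5 (t u : ℝ) : Matrix (Fin 3) (Fin 3) ℂ :=
  !![1, 0, 0;
     0, (Real.cosh t : ℂ), Complex.exp (-I * u) * Real.sinh t;
     0, Complex.exp (I * u) * Real.sinh t, (Real.cosh t : ℂ)]

/-- I₋ = diag(1,1,-1). -/
def Iminus : Matrix (Fin 3) (Fin 3) ℂ := !![1, 0, 0; 0, 1, 0; 0, 0, -1]

/-- The indefinite metric g(X,Y) = ½ Re trace(I₋ Xᴴ I₋ Y). -/
def gSU21 (X Y : Matrix (Fin 3) (Fin 3) ℂ) : ℝ :=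
  (1 / 2) * ((Iminus * Xᴴ * Iminus * Y).trace).re

/-- Projection onto m: removal of the diagonal (h-)component. -/
def projm (X : Matrix (Fin 3) (Fin 3) ℂ) : Matrix (Fin 3) (Fin 3) ℂ :=
  X - Matrix.diagonal fun i => X i i

def dt (F : ℝ → ℝ → Matrix (Fin 3) (Fin 3) ℂ) (t u : ℝ) :
    Matrix (Fin 3) (Fin 3) ℂ :=
  Matrix.of fun i j => deriv (fun s => F s u i j) t

def du (F : ℝ → ℝ → Matrix (Fin 3) (Fin 3) ℂ) (t u : ℝ) :
    Matrix (Fin 3) (Fin 3) ℂ :=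
  Matrix.of fun i j => deriv (fun v => F t v i j) u

lemma Iminus_eq_diagonal : Iminus = diagonal ![1, 1, -1] := by
  ext i j; fin_cases i <;> fin_cases j <;> rfl

section Metric

variable (X Y Z : Matrix (Fin 3) (Fin 3) ℂ)

lemma gSU21_smul_left (r : ℝ) : gSU21 ((r : ℂ) • X) Y = r * gSU21 X Y := by
  simp only [gSU21, conjTranspose_smul, Complex.star_def, Complex.conj_ofReal, Matrix.smul_mul,
    Matrix.mul_smul, trace_smul, smul_eq_mul, Complex.re_ofReal_mul]
  ring

lemma gSU21_smul_right (r : ℝ) : gSU21 X ((r : ℂ) • Y) = r * gSU21 X Y := by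
  simp only [gSU21, Matrix.mul_smul, trace_smul, smul_eq_mul, Complex.re_ofReal_mul]
  ring

lemma gSU21_sub_right : gSU21 X (Y - Z) = gSU21 X Y - gSU21 X Z := by
  simp only [gSU21, Matrix.mul_sub, trace_sub, Complex.sub_re]
  ring

lemma gSU21_diagonal_right_eq_zero (hX : ∀ i, X i i = 0) (d : Fin 3 → ℂ) :
    gSU21 X (diagonal d) = 0 := by
  simp [gSU21, Iminus_eq_diagonal, trace, mul_diagonal, diagonal_mul, hX]

lemma projm_sub_diagonal (hX : ∀ i, X i i = 0) (d : Fin 3 → ℂ) :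
    projm (X - diagonal d) = X := by
  ext i j
  by_cases h : i = j
  · subst h; simp [projm, hX]
  · simp [projm, h]

end Metric

lemma deriv_cosh_ofReal (t : ℝ) : deriv (fun s : ℝ => Complex.cosh s) t = Complex.sinh t :=
  (Complex.hasDerivAt_cosh t).comp_ofReal.deriv

lemma deriv_sinh_ofReal (t : ℝ) : deriv (fun s : ℝ => Complex.sinh s) t = Complex.cosh t :=
  (Complex.hasDerivAt_sinh t).comp_ofReal.deriv

lemma deriv_cexp_const_mul_ofReal (c : ℂ) (u : ℝ) :
    deriv (fun v : ℝ => Complex.exp (c * v)) u = c * Complex.exp (c * u) := by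
  have h : HasDerivAt (fun v : ℂ => Complex.exp (c * v)) (c * Complex.exp (c * u)) u := by
    simpa [mul_comm] using ((hasDerivAt_id (u : ℂ)).const_mul c).cexp
  exact h.comp_ofReal.deriv

lemma cosh_sq_sub_sinh_sq_ofReal (t : ℝ) :
    (Real.cosh t : ℂ) ^ 2 - (Real.sinh t : ℂ) ^ 2 = 1 := by
  exact_mod_cast Real.cosh_sq_sub_sinh_sq t

lemma exp_neg_I_mul_mul_exp_I_mul (u : ℝ) :
    Complex.exp (-I * u) * Complex.exp (I * u) = 1 := by
  rw [← Complex.exp_add, neg_mul, neg_add_cancel, Complex.exp_zero]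

lemma star_exp_I_mul_ofReal (u : ℝ) : star (Complex.exp (I * u)) = Complex.exp (-I * u) := by
  rw [Complex.star_def, ← Complex.exp_conj]
  simp

lemma star_exp_neg_I_mul_ofReal (u : ℝ) : star (Complex.exp (-I * u)) = Complex.exp (I * u) := by
  rw [Complex.star_def, ← Complex.exp_conj]
  simp

lemma gSU21_antidiag_block (a b c d : ℂ) :
    gSU21 !![0, 0, 0; 0, 0, a; 0, b, 0] !![0, 0, 0; 0, 0, c; 0, d, 0] =
      -(star a * c + star b * d).re / 2 := by
  simp [gSU21, Iminus_eq_diagonal, trace, Matrix.mul_apply, Fin.sum_univ_three]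
  ring

namespace F5

def P (u : ℝ) : Matrix (Fin 3) (Fin 3) ℂ :=
  !![0, 0, 0; 0, 0, Complex.exp (-I * u); 0, Complex.exp (I * u), 0]

def Q (u : ℝ) : Matrix (Fin 3) (Fin 3) ℂ :=
  !![0, 0, 0; 0, 0, -I * Complex.exp (-I * u); 0, I * Complex.exp (I * u), 0]

lemma P_apply_self (u : ℝ) (i : Fin 3) : P u i i = 0 := by
  fin_cases i <;> rfl

lemma Q_apply_self (u : ℝ) (i : Fin 3) : Q u i i = 0 := by
  fin_cases i <;> rfl

lemma neg_mul_self (t u : ℝ) : F5 (-t) u * F5 t u = 1 := by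
  rw [F5, F5, mul_fin_three, one_fin_three]
  simp only [EmbeddingLike.apply_eq_iff_eq, vecCons_inj, and_true, Real.cosh_neg, Real.sinh_neg,
    ofReal_neg]
  grind [exp_neg_I_mul_mul_exp_I_mul u, cosh_sq_sub_sinh_sq_ofReal t]

lemma inv_eq (t u : ℝ) : (F5 t u)⁻¹ = F5 (-t) u :=
  inv_eq_left_inv (neg_mul_self t u)

lemma dt_eq (t u : ℝ) : dt F5 t u =
    !![0, 0, 0;
       0, (Real.sinh t : ℂ), Complex.exp (-I * u) * Real.cosh t;
       0, Complex.exp (I * u) * Real.cosh t, (Real.sinh t : ℂ)] := by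
  ext i j
  fin_cases i <;> fin_cases j <;> simp [dt, F5, deriv_cosh_ofReal, deriv_sinh_ofReal]

lemma du_eq (t u : ℝ) : du F5 t u = (Real.sinh t : ℂ) • Q u := by
  ext i j
  fin_cases i <;> fin_cases j <;> simp [du, F5, Q, deriv_cexp_const_mul_ofReal, -neg_mul] <;> ring

lemma inv_mul_dt (t u : ℝ) : (F5 t u)⁻¹ * dt F5 t u = P u := by
  rw [inv_eq, dt_eq, F5, P, mul_fin_three]
  simp only [EmbeddingLike.apply_eq_iff_eq, vecCons_inj, and_true, Real.cosh_neg, Real.sinh_neg,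
    ofReal_neg]
  grind [exp_neg_I_mul_mul_exp_I_mul u, cosh_sq_sub_sinh_sq_ofReal t]

lemma inv_mul_du (t u : ℝ) : (F5 t u)⁻¹ * du F5 t u =
    ((Real.sinh t * Real.cosh t : ℝ) : ℂ) • Q u
      - diagonal ![0, I * Real.sinh t ^ 2, -(I * Real.sinh t ^ 2)] := by
  rw [inv_eq, du_eq, F5, Q, diagonal_fin_three, Matrix.mul_smul, mul_fin_three]
  simp only [smul_of, of_sub_of, smul_cons, smul_empty, smul_eq_mul, cons_sub_cons,
    empty_sub_empty, cons_val_zero, cons_val_one, cons_val_two, head_cons, tail_cons,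
    EmbeddingLike.apply_eq_iff_eq, vecCons_inj, and_true, Real.cosh_neg,
    Real.sinh_neg, ofReal_neg, ofReal_mul]
  grind [exp_neg_I_mul_mul_exp_I_mul u]

lemma gSU21_P_P (u : ℝ) : gSU21 (P u) (P u) = -1 := by
  rw [P, gSU21_antidiag_block, star_exp_neg_I_mul_ofReal, star_exp_I_mul_ofReal]
  ring_nf
  norm_num [← Complex.exp_add]

lemma gSU21_P_Q (u : ℝ) : gSU21 (P u) (Q u) = 0 := by
  rw [P, Q, gSU21_antidiag_block, star_exp_neg_I_mul_ofReal, star_exp_I_mul_ofReal]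
  ring_nf
  norm_num [← Complex.exp_add]

lemma gSU21_Q_Q (u : ℝ) : gSU21 (Q u) (Q u) = -1 := by
  rw [Q, gSU21_antidiag_block]
  simp only [star_mul', star_neg, Complex.star_def, Complex.conj_I, star_exp_neg_I_mul_ofReal,
    star_exp_I_mul_ofReal]
  ring_nf
  norm_num [← Complex.exp_add]

end F5

/-- The pullback of the indefinite metric along F₅. -/
theorem F5_induced_metric (t u : ℝ) :
    gSU21 ((F5 t u)⁻¹ * dt F5 t u) ((F5 t u)⁻¹ * dt F5 t u) = -1 ∧
    gSU21 ((F5 t u)⁻¹ * dt F5 t u) ((F5 t u)⁻¹ * du F5 t u) = 0 ∧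
    gSU21 (projm ((F5 t u)⁻¹ * du F5 t u)) (projm ((F5 t u)⁻¹ * du F5 t u)) =
      -(Real.sinh (2 * t) / 2) ^ 2 := by
  have hm : ∀ i, (((Real.sinh t * Real.cosh t : ℝ) : ℂ) • F5.Q u) i i = 0 := fun i => by
    simp [F5.Q_apply_self]
  rw [F5.inv_mul_dt, F5.inv_mul_du, projm_sub_diagonal _ hm]
  refine ⟨F5.gSU21_P_P u, ?_, ?_⟩
  · rw [gSU21_sub_right, gSU21_diagonal_right_eq_zero _ (F5.P_apply_self u), gSU21_smul_right,
      F5.gSU21_P_Q, mul_zero, sub_zero]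
  · rw [gSU21_smul_left, gSU21_smul_right, F5.gSU21_Q_Q, Real.sinh_two_mul]
    ring

end
end
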